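/- arXiv:2106.01257 — 2 statements merged into one kernel-verified Lean document; each statement's English description precedes it below -/
import Mathlib

section
/- Let Q be a symmetric positive definite d×d real matrix and A a d×d real matrix satisfying the Lyapunov equation A^T Q + Q A = I. Set a = 1/(2‖Q‖) and α_∞ = (1/2)‖A‖_Q^{-2}‖Q‖^{-1}, where ‖·‖_Q denotes the operator norm induced by the norm x ↦ √(xᵀQx). Then for any α ∈ [0, α_∞], ‖I − αA‖_Q² ≤ 1 − aα. -/
/-! Expanding the `Q`-form with the Lyapunov equation gives
`‖(I - αA)x‖_Q² = ‖x‖_Q² - α |x|² + α² ‖Ax‖_Q²`. On the `Q`-unit sphere `|x|² ≥ 1/‖Q‖`,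
while `α ≤ α∞` gives `α² ‖Ax‖_Q² ≤ α · (α ‖A‖_Q²) ≤ α/(2‖Q‖)`; together this is `1 - α/(2‖Q‖)`.
The supremum defining `‖·‖_Q` is finite because `Q = SᵀS` with `S` invertible, which reduces
`Q`-forms to Euclidean ones. -/

open MeasureTheory Real Matrix Filter

noncomputable def specNorm {d : ℕ} (A : Matrix (Fin d) (Fin d) ℝ) : ℝ :=
  ‖LinearMap.toContinuousLinearMap (Matrix.toEuclideanLin A)‖

noncomputable def qNorm {d : ℕ} (Q B : Matrix (Fin d) (Fin d) ℝ) : ℝ :=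
  sSup {r : ℝ | ∃ x : Fin d → ℝ, x ⬝ᵥ Q.mulVec x = 1 ∧
    r = Real.sqrt (B.mulVec x ⬝ᵥ Q.mulVec (B.mulVec x))}

open scoped MatrixOrder in
theorem Matrix.PosDef.exists_isUnit_transpose_mul_self {n : Type*} [Fintype n] [DecidableEq n]
    {Q : Matrix n n ℝ} (hQ : Q.PosDef) : ∃ S : Matrix n n ℝ, IsUnit S ∧ Sᵀ * S = Q := by
  refine ⟨CFC.sqrt Q, (CFC.isUnit_sqrt_iff Q hQ.posSemidef.nonneg).2 hQ.isUnit, ?_⟩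
  rw [← conjTranspose_eq_transpose_of_trivial, ← star_eq_conjTranspose,
    (CFC.sqrt_nonneg Q).isSelfAdjoint.star_eq, CFC.sqrt_mul_sqrt_self Q hQ.posSemidef.nonneg]

theorem specNorm_nonneg {d : ℕ} (P : Matrix (Fin d) (Fin d) ℝ) : 0 ≤ specNorm P := norm_nonneg _

theorem dotProduct_mulVec_le_specNorm_mul {d : ℕ} (P : Matrix (Fin d) (Fin d) ℝ)
    (x : Fin d → ℝ) : x ⬝ᵥ P *ᵥ x ≤ specNorm P * (x ⬝ᵥ x) := by
  set T := LinearMap.toContinuousLinearMap (toEuclideanLin P)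
  set e := WithLp.toLp 2 x
  have hPx : x ⬝ᵥ P *ᵥ x = inner ℝ e (T e) := by
    rw [EuclideanSpace.inner_toLp_toLp, star_trivial, dotProduct_comm]; rfl
  have hx : x ⬝ᵥ x = ‖e‖ * ‖e‖ := by
    rw [← real_inner_self_eq_norm_mul_norm, EuclideanSpace.inner_toLp_toLp, star_trivial]
  calc x ⬝ᵥ P *ᵥ x = inner ℝ e (T e) := hPx
    _ ≤ ‖e‖ * ‖T e‖ := real_inner_le_norm _ _
    _ ≤ ‖e‖ * (‖T‖ * ‖e‖) := by gcongr; exact T.le_opNorm e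
    _ = specNorm P * (x ⬝ᵥ x) := by rw [hx, specNorm]; ring

theorem Matrix.PosDef.exists_dotProduct_mulVec_le {d : ℕ} {Q : Matrix (Fin d) (Fin d) ℝ}
    (hQ : Q.PosDef) (P : Matrix (Fin d) (Fin d) ℝ) :
    ∃ C, ∀ x, x ⬝ᵥ P *ᵥ x ≤ C * (x ⬝ᵥ Q *ᵥ x) := by
  obtain ⟨S, hS, rfl⟩ := hQ.exists_isUnit_transpose_mul_self
  have hSx (x : Fin d → ℝ) : S⁻¹ *ᵥ (S *ᵥ x) = x := by
    rw [mulVec_mulVec, nonsing_inv_mul S ((isUnit_iff_isUnit_det S).1 hS), one_mulVec]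
  refine ⟨specNorm (S⁻¹ᵀ * P * S⁻¹), fun x => ?_⟩
  calc x ⬝ᵥ P *ᵥ x = S *ᵥ x ⬝ᵥ (S⁻¹ᵀ * P * S⁻¹) *ᵥ (S *ᵥ x) := by
        rw [← mulVec_mulVec, hSx, ← mulVec_mulVec, dotProduct_transpose_mulVec, hSx,
          dotProduct_comm]
    _ ≤ specNorm (S⁻¹ᵀ * P * S⁻¹) * (S *ᵥ x ⬝ᵥ S *ᵥ x) :=
        dotProduct_mulVec_le_specNorm_mul _ _
    _ = specNorm (S⁻¹ᵀ * P * S⁻¹) * (x ⬝ᵥ (Sᵀ * S) *ᵥ x) := by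
        rw [← mulVec_mulVec, dotProduct_transpose_mulVec]

section qNorm

variable {d : ℕ} {Q : Matrix (Fin d) (Fin d) ℝ}

theorem qNorm_nonneg (Q B : Matrix (Fin d) (Fin d) ℝ) : 0 ≤ qNorm Q B :=
  Real.sSup_nonneg fun _ ⟨_, _, hr⟩ => hr ▸ Real.sqrt_nonneg _

theorem qNorm_eq_zero_of_forall_ne_one (h : ∀ x, x ⬝ᵥ Q *ᵥ x ≠ 1)
    (B : Matrix (Fin d) (Fin d) ℝ) : qNorm Q B = 0 := by
  simp [qNorm, h]

theorem dotProduct_mulVec_le_qNorm_sq (hQ : Q.PosDef) (B : Matrix (Fin d) (Fin d) ℝ)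
    {x : Fin d → ℝ} (hx : x ⬝ᵥ Q *ᵥ x = 1) :
    B *ᵥ x ⬝ᵥ Q *ᵥ (B *ᵥ x) ≤ qNorm Q B ^ 2 := by
  obtain ⟨C, hC⟩ := hQ.exists_dotProduct_mulVec_le (Bᵀ * Q * B)
  have hBQB (y : Fin d → ℝ) : B *ᵥ y ⬝ᵥ Q *ᵥ (B *ᵥ y) = y ⬝ᵥ (Bᵀ * Q * B) *ᵥ y := by
    rw [← mulVec_mulVec, ← mulVec_mulVec, dotProduct_transpose_mulVec, dotProduct_comm]
  have hbdd : BddAbove {r : ℝ | ∃ y : Fin d → ℝ, y ⬝ᵥ Q *ᵥ y = 1 ∧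
      r = √(B *ᵥ y ⬝ᵥ Q *ᵥ (B *ᵥ y))} := by
    refine ⟨√C, fun r ⟨y, hy, hr⟩ => hr ▸ Real.sqrt_le_sqrt ?_⟩
    have hCy := hC y
    rwa [hy, mul_one, ← hBQB] at hCy
  have hle : √(B *ᵥ x ⬝ᵥ Q *ᵥ (B *ᵥ x)) ≤ qNorm Q B := le_csSup hbdd ⟨x, hx, rfl⟩
  have hnonneg : 0 ≤ B *ᵥ x ⬝ᵥ Q *ᵥ (B *ᵥ x) := hQ.posSemidef.dotProduct_mulVec_nonneg _
  rw [← Real.sq_sqrt hnonneg]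
  gcongr

theorem qNorm_sq_le {B : Matrix (Fin d) (Fin d) ℝ} {c : ℝ} (hc : 0 ≤ c)
    (h : ∀ x, x ⬝ᵥ Q *ᵥ x = 1 → B *ᵥ x ⬝ᵥ Q *ᵥ (B *ᵥ x) ≤ c) : qNorm Q B ^ 2 ≤ c := by
  have hle : qNorm Q B ≤ √c :=
    Real.sSup_le (fun _ ⟨x, hx, hr⟩ => hr ▸ Real.sqrt_le_sqrt (h x hx)) (Real.sqrt_nonneg c)
  calc qNorm Q B ^ 2 ≤ √c ^ 2 := by gcongr; exact qNorm_nonneg Q B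
    _ = c := Real.sq_sqrt hc

end qNorm

theorem zpow_neg_mul_zpow_le_one {K : Type*} [Field K] [LinearOrder K] [IsStrictOrderedRing K]
    (a : K) (n : ℤ) : a ^ (-n) * a ^ n ≤ 1 := by
  rcases eq_or_ne a 0 with rfl | ha
  · rcases eq_or_ne n 0 with rfl | hn
    · simp
    · simp [_root_.zero_zpow n hn]
  · rw [_root_.zpow_neg, inv_mul_cancel₀ (zpow_ne_zero n ha)]

theorem dotProduct_mulVec_one_sub_smul_mulVec {n : Type*} [Fintype n] [DecidableEq n]
    {Q A : Matrix n n ℝ} (hLyap : Aᵀ * Q + Q * A = 1) (α : ℝ) (x : n → ℝ) :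
    (1 - α • A) *ᵥ x ⬝ᵥ Q *ᵥ ((1 - α • A) *ᵥ x) =
      x ⬝ᵥ Q *ᵥ x - α * (x ⬝ᵥ x) + α ^ 2 * (A *ᵥ x ⬝ᵥ Q *ᵥ (A *ᵥ x)) := by
  have hcross : x ⬝ᵥ Q *ᵥ (A *ᵥ x) + A *ᵥ x ⬝ᵥ Q *ᵥ x = x ⬝ᵥ x := by
    have h := congrArg (fun M => x ⬝ᵥ M *ᵥ x) hLyap
    simp only [add_mulVec, ← mulVec_mulVec, dotProduct_add, dotProduct_transpose_mulVec,
      one_mulVec] at h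
    rw [← h, dotProduct_comm (Q *ᵥ x), add_comm]
  simp only [sub_mulVec, one_mulVec, smul_mulVec, mulVec_sub, mulVec_smul, sub_dotProduct,
    dotProduct_sub, smul_dotProduct, dotProduct_smul, smul_eq_mul]
  linear_combination (-α) * hcross

theorem dotProduct_mulVec_one_sub_smul_mulVec_le {d : ℕ} {Q A : Matrix (Fin d) (Fin d) ℝ}
    (hQ : Q.PosDef) (hLyap : Aᵀ * Q + Q * A = 1) {α : ℝ} (hα : 0 ≤ α)
    (hαA : α * qNorm Q A ^ 2 ≤ 1 / (2 * specNorm Q)) {x : Fin d → ℝ}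
    (hx : x ⬝ᵥ Q *ᵥ x = 1) :
    (1 - α • A) *ᵥ x ⬝ᵥ Q *ᵥ ((1 - α • A) *ᵥ x) ≤ 1 - 1 / (2 * specNorm Q) * α := by
  have hQx : 1 ≤ specNorm Q * (x ⬝ᵥ x) := hx ▸ dotProduct_mulVec_le_specNorm_mul Q x
  have hQ0 : 0 < specNorm Q := (specNorm_nonneg Q).lt_of_ne <| fun h => by
    rw [← h, zero_mul] at hQx; norm_num at hQx
  have hAx := dotProduct_mulVec_le_qNorm_sq hQ A hx
  have hsq : α ^ 2 * (A *ᵥ x ⬝ᵥ Q *ᵥ (A *ᵥ x)) ≤ 1 / (2 * specNorm Q) * α :=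
    calc α ^ 2 * (A *ᵥ x ⬝ᵥ Q *ᵥ (A *ᵥ x)) ≤ α * (α * qNorm Q A ^ 2) := by
          rw [sq, mul_assoc]; gcongr
      _ ≤ α * (1 / (2 * specNorm Q)) := by gcongr
      _ = 1 / (2 * specNorm Q) * α := mul_comm _ _
  have hlin : 1 / specNorm Q * α ≤ α * (x ⬝ᵥ x) := by
    rw [div_mul_eq_mul_div, one_mul, div_le_iff₀ hQ0]
    nlinarith
  rw [dotProduct_mulVec_one_sub_smul_mulVec hLyap, hx]
  have hhalf : 1 / specNorm Q * α = 2 * (1 / (2 * specNorm Q) * α) := by field_simp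
  linarith

theorem stmt0_general {d : ℕ} (Q A : Matrix (Fin d) (Fin d) ℝ)
    (hQpd : Q.PosDef)
    (hLyap : Aᵀ * Q + Q * A = 1)
    (a αinf : ℝ)
    (ha : a = 1 / (2 * specNorm Q))
    (hαinf : αinf = (1 / 2) * (qNorm Q A) ^ (-2 : ℤ) * (specNorm Q)⁻¹) :
    ∀ α ∈ Set.Icc (0 : ℝ) αinf,
      qNorm Q (1 - α • A) ^ 2 ≤ 1 - a * α := by
  rintro α ⟨hα0, hα⟩
  subst ha
  have hαA : α * qNorm Q A ^ 2 ≤ 1 / (2 * specNorm Q) :=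
    calc α * qNorm Q A ^ 2 ≤ αinf * qNorm Q A ^ 2 := by gcongr
      _ = 1 / (2 * specNorm Q) * (qNorm Q A ^ (-2 : ℤ) * qNorm Q A ^ (2 : ℤ)) := by
          rw [hαinf]; norm_cast; ring
      _ ≤ 1 / (2 * specNorm Q) := by
          have := specNorm_nonneg Q
          exact mul_le_of_le_one_right (by positivity) (zpow_neg_mul_zpow_le_one _ _)
  by_cases hex : ∃ x, x ⬝ᵥ Q *ᵥ x = 1
  · obtain ⟨x₀, hx₀⟩ := hex
    have hbound := fun x (hx : x ⬝ᵥ Q *ᵥ x = 1) =>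
      dotProduct_mulVec_one_sub_smul_mulVec_le hQpd hLyap hα0 hαA hx
    exact qNorm_sq_le ((hQpd.posSemidef.dotProduct_mulVec_nonneg _).trans (hbound x₀ hx₀)) hbound
  · -- no `Q`-unit vectors: every `qNorm` is `sSup ∅ = 0`, and `0 ^ (-2) = 0` forces `α = 0`
    simp only [not_exists] at hex
    have hα' : α = 0 := by
      simp [hαinf, qNorm_eq_zero_of_forall_ne_one hex] at hα
      linarith
    simp [hα', qNorm_eq_zero_of_forall_ne_one hex]

/-- Proposition 1 (first part): if `AᵀQ + QA = I` with `Q` symmetric positive definite,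
then for `a = 1/(2‖Q‖)` and `α∞ = (1/2)‖A‖_Q⁻²‖Q‖⁻¹`, every `α ∈ [0, α∞]` satisfies
`‖I − αA‖_Q² ≤ 1 − aα`. -/
theorem stmt0 {d : ℕ} (Q A : Matrix (Fin d) (Fin d) ℝ)
    (hQsymm : Q.IsSymm) (hQpd : Q.PosDef)
    (hLyap : Aᵀ * Q + Q * A = 1)
    (a αinf : ℝ)
    (ha : a = 1 / (2 * specNorm Q))
    (hαinf : αinf = (1 / 2) * (qNorm Q A) ^ (-2 : ℤ) * (specNorm Q)⁻¹) :
    ∀ α ∈ Set.Icc (0 : ℝ) αinf,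
      qNorm Q (1 - α • A) ^ 2 ≤ 1 - a * α :=
  stmt0_general Q A hQpd hLyap a αinf ha hαinf
end

section
/- For every real x ≥ 1, Γ(x) ≤ x^{(2x−1)/2} e^{1−x}, i.e., Γ(p/2) ≤ (p/2)^{(p−1)/2} e^{1−p/2} for p ≥ 2. -/
/-!
Let `F x = log Γ(x) - ((x - 1/2) log x - x + 1)` (`stirlingDefect`), so the claim is `F x ≤ 0`
for `x ≥ 1`, and `F 1 = 0`. The series `log (1 + 1/t) = 2 ∑ r^(2k+1)/(2k+1)`, `r = 1/(2t+1)`,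
gives `F t - F (t+1) = ∑_{k ≥ 1} r^(2k)/(2k+1)`, which is nonnegative and decreasing in `t`.
Hence `F` decreases along integer steps, which reduces the claim to `x ∈ [1, 2]`, and telescoping
gives `F x ≤ F (x + n) - F (1 + n)`. Log-convexity of `Γ` between `1 + n` and `2 + n` bounds the
right side by `1 / (2 (n + 1))`, which tends to `0`.
-/

open Real Finset

noncomputable def stirlingDefect (x : ℝ) : ℝ :=
  log (Gamma x) - ((x - 1 / 2) * log x - x + 1)

theorem stirlingDefect_one : stirlingDefect 1 = 0 := by
  simp [stirlingDefect]

theorem stirlingDefect_sub_succ {t : ℝ} (ht : 0 < t) :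
    stirlingDefect t - stirlingDefect (t + 1) = (t + 1 / 2) * log (1 + t⁻¹) - 1 := by
  have h : 1 + t⁻¹ = (t + 1) / t := by field_simp
  rw [stirlingDefect, stirlingDefect, Gamma_add_one ht.ne',
    log_mul ht.ne' (Gamma_pos_of_pos ht).ne', h, log_div (by positivity) ht.ne']
  ring

theorem hasSum_stirlingDefect_sub_succ {t : ℝ} (ht : 0 < t) :
    HasSum (fun k : ℕ => 1 / (2 * k + 3) * (1 / (2 * t + 1)) ^ (2 * k + 2))
      (stirlingDefect t - stirlingDefect (t + 1)) := by
  have hf : HasSum (fun k : ℕ => 1 / (2 * k + 1) * (1 / (2 * t + 1)) ^ (2 * k))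
      ((t + 1 / 2) * log (1 + t⁻¹)) := by
    convert! (hasSum_log_one_add_inv ht).mul_left (t + 1 / 2) using 2 with k
    rw [pow_succ]
    field_simp
  rw [stirlingDefect_sub_succ ht]
  convert! (hasSum_nat_add_iff' 1).mpr hf using 2 with k
  · push_cast
    ring_nf
  · simp

theorem stirlingDefect_succ_le {t : ℝ} (ht : 0 < t) :
    stirlingDefect (t + 1) ≤ stirlingDefect t :=
  sub_nonneg.mp <| (hasSum_stirlingDefect_sub_succ ht).nonneg fun _ => by positivity

theorem stirlingDefect_sub_succ_le_of_le {s t : ℝ} (hs : 0 < s) (hst : s ≤ t) :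
    stirlingDefect t - stirlingDefect (t + 1) ≤ stirlingDefect s - stirlingDefect (s + 1) :=
  have ht := hs.trans_le hst
  hasSum_le (fun k => by gcongr) (hasSum_stirlingDefect_sub_succ ht)
    (hasSum_stirlingDefect_sub_succ hs)

theorem stirlingDefect_add_nat_le {x : ℝ} (hx : 0 < x) (n : ℕ) :
    stirlingDefect (x + n) ≤ stirlingDefect x := by
  induction n with
  | zero => simp
  | succ n ih =>
    rw [Nat.cast_succ, ← add_assoc]
    exact (stirlingDefect_succ_le (by positivity)).trans ih

theorem stirlingDefect_sub_add_nat_le {x : ℝ} (hx : 1 ≤ x) (n : ℕ) :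
    stirlingDefect x - stirlingDefect (x + n) ≤ stirlingDefect 1 - stirlingDefect (1 + n) := by
  have telescope (y : ℝ) : stirlingDefect y - stirlingDefect (y + n) =
      ∑ i ∈ range n, (stirlingDefect (y + i) - stirlingDefect (y + i + 1)) := by
    simpa [add_assoc] using (sum_range_sub' (fun i : ℕ => stirlingDefect (y + i)) n).symm
  rw [telescope, telescope]
  exact sum_le_sum fun i _ => stirlingDefect_sub_succ_le_of_le (by positivity) (by linarith)

theorem stirlingDefect_add_le {a s : ℝ} (ha : 1 / 2 ≤ a) (hs₀ : 0 ≤ s) (hs₁ : s ≤ 1) :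
    stirlingDefect (a + s) ≤ stirlingDefect a + 1 / (2 * a) := by
  have ha₀ : 0 < a := by linarith
  have hconv : log (Gamma (a + s)) ≤ log (Gamma a) + s * log a := by
    have h := convexOn_log_Gamma.2 (Set.mem_Ioi.mpr ha₀)
      (Set.mem_Ioi.mpr (by linarith : 0 < a + 1)) (by linarith : 0 ≤ 1 - s) hs₀ (by ring)
    simp only [Function.comp_apply, smul_eq_mul, Gamma_add_one ha₀.ne',
      log_mul ha₀.ne' (Gamma_pos_of_pos ha₀).ne'] at h
    rw [show (1 - s) * a + s * (a + 1) = a + s by ring] at h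
    linarith
  have hlog : s / (a + s) ≤ log (a + s) - log a := by
    have h := one_sub_inv_le_log_of_pos (x := (a + s) / a) (by positivity)
    rw [log_div (by positivity) ha₀.ne', inv_div] at h
    convert h using 1
    field_simp
    ring
  have hmul := mul_le_mul_of_nonneg_left hlog (by linarith : 0 ≤ a + s - 1 / 2)
  have hfrac : s - 1 / (2 * a) ≤ (a + s - 1 / 2) * (s / (a + s)) := by
    have h : (a + s - 1 / 2) * (s / (a + s)) - (s - 1 / (2 * a)) =
        (a + s - s * a) / (2 * a * (a + s)) := by
      field_simp
      ring
    rw [← sub_nonneg, h]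
    apply div_nonneg <;> nlinarith
  unfold stirlingDefect
  linarith

theorem stirlingDefect_nonpos_of_le_two {x : ℝ} (hx₁ : 1 ≤ x) (hx₂ : x ≤ 2) :
    stirlingDefect x ≤ 0 := by
  have bound (n : ℕ) : stirlingDefect x ≤ 1 / 2 * (1 / ((n : ℝ) + 1)) := by
    have h₁ := stirlingDefect_sub_add_nat_le hx₁ n
    have h₂ := stirlingDefect_add_le (a := 1 + n) (s := x - 1)
      (by linarith [n.cast_nonneg (α := ℝ)]) (by linarith) (by linarith)
    rw [stirlingDefect_one] at h₁
    rw [show 1 + n + (x - 1) = x + n by ring] at h₂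
    have h : 1 / (2 * (1 + n : ℝ)) = 1 / 2 * (1 / (n + 1)) := by field_simp; ring
    linarith
  simpa using ge_of_tendsto' (tendsto_one_div_add_atTop_nhds_zero_nat.const_mul (1 / 2)) bound

theorem stirlingDefect_nonpos {x : ℝ} (hx : 1 ≤ x) : stirlingDefect x ≤ 0 := by
  set n := ⌊x - 1⌋₊
  have hn₁ : (n : ℝ) ≤ x - 1 := Nat.floor_le (by linarith)
  have hn₂ : x - 1 < n + 1 := Nat.lt_floor_add_one _
  calc stirlingDefect x = stirlingDefect (x - n + n) := by rw [sub_add_cancel]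
    _ ≤ stirlingDefect (x - n) := stirlingDefect_add_nat_le (by linarith) n
    _ ≤ 0 := stirlingDefect_nonpos_of_le_two (by linarith) (by linarith)

theorem Gamma_le_rpow_mul_exp {x : ℝ} (hx : 1 ≤ x) :
    Gamma x ≤ x ^ ((2 * x - 1) / 2) * exp (1 - x) := by
  have hx₀ : 0 < x := by linarith
  rw [← exp_log (Gamma_pos_of_pos hx₀), rpow_def_of_pos hx₀, ← exp_add, exp_le_exp]
  have h := stirlingDefect_nonpos hx
  unfold stirlingDefect at h
  linarith

/-- Gamma function bound: `Γ(x) ≤ x^{(2x−1)/2} e^{1−x}` for `x ≥ 1`; equivalently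
`Γ(p/2) ≤ (p/2)^{(p−1)/2} e^{1−p/2}` for `p ≥ 2`. -/
theorem stmt12 :
    (∀ x : ℝ, 1 ≤ x → Real.Gamma x ≤ x ^ ((2 * x - 1) / 2) * Real.exp (1 - x))
      ∧ (∀ p : ℝ, 2 ≤ p →
        Real.Gamma (p / 2) ≤ (p / 2) ^ ((p - 1) / 2) * Real.exp (1 - p / 2)) := by
  refine ⟨fun x hx => Gamma_le_rpow_mul_exp hx, fun p hp => ?_⟩
  have h := Gamma_le_rpow_mul_exp (x := p / 2) (by linarith)
  rwa [show (2 * (p / 2) - 1) / 2 = (p - 1) / 2 by ring] at h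
end
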